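/- Let $\alpha \in (1,2)$ and define $\theta_\alpha(s,t) = \frac{\alpha-1}{\alpha}\cdot\frac{s-t}{s^{\alpha-1}-t^{\alpha-1}}$ for $s \neq t > 0$ and $\theta_\alpha(s,s) = \frac{1}{\alpha}s^{2-\alpha}$. Then $M_{\theta_\alpha} := \inf_{s,t>0} \frac{\theta_\alpha(s,s)+\theta_\alpha(t,t)}{2\theta_\alpha(s,t)}$ equals $1$ if $\alpha \in (1, 3/2]$ and equals $\frac{1}{2(\alpha-1)}$ if $\alpha \in (3/2, 2)$. -/

import Mathlib

/-!
Off the diagonal, with `p = α - 1`, the quotient is `(s^(1-p) + t^(1-p)) (s^p - t^p) / (2p (s - t))`.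
Writing `s = e^(m+d)`, `t = e^(m-d)` with `d ≥ 0`, the numerator is `2 e^m (sinh d - sinh ((1-2p) d))`
and `s - t = 2 e^m sinh d`. Convexity of `sinh` on `[0, ∞)` gives `sinh (c d) ≤ max c 0 * sinh d`,
so the quotient is at least `min 1 (1/(2p))`. The value `1` is attained on the diagonal, and the
quotient at `(r, 1)` tends to `1/(2p)` as `r → ∞`.
-/

open Real Filter Topology

theorem Real.convexOn_sinh_Ici : ConvexOn ℝ (Set.Ici 0) sinh := by
  refine MonotoneOn.convexOn_of_deriv (convex_Ici 0) continuous_sinh.continuousOn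
    differentiable_sinh.differentiableOn ?_
  rw [Real.deriv_sinh, interior_Ici]
  intro x hx y _ hxy
  exact cosh_le_cosh.2 (by rwa [abs_of_pos hx, abs_of_pos (lt_of_lt_of_le hx hxy)])

theorem Real.sinh_mul_le_max_mul_sinh {c x : ℝ} (hc : c ≤ 1) (hx : 0 ≤ x) :
    sinh (c * x) ≤ max c 0 * sinh x := by
  rcases le_total 0 c with hc0 | hc0
  · simpa [max_eq_left hc0] using
      convexOn_sinh_Ici.2 (Set.mem_Ici.2 hx) Set.self_mem_Ici hc0 (sub_nonneg.2 hc) (by ring)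
  · rw [max_eq_right hc0, zero_mul, sinh_nonpos_iff]
    exact mul_nonpos_of_nonpos_of_nonneg hc0 hx

theorem exp_rpow_add_mul_exp_rpow_sub (p m d : ℝ) :
    (exp (m + d) ^ (1 - p) + exp (m - d) ^ (1 - p)) * (exp (m + d) ^ p - exp (m - d) ^ p) =
      2 * exp m * (sinh d - sinh ((1 - 2 * p) * d)) := by
  simp only [← exp_mul, sinh_eq, add_mul, mul_sub, sub_mul, ← exp_add]
  ring_nf
  simp only [← exp_add]
  ring_nf

theorem min_mul_sub_le_rpow_add_mul_rpow_sub {p s t : ℝ} (hp : 0 ≤ p) (ht : 0 < t) (hts : t ≤ s) :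
    min (2 * p) 1 * (s - t) ≤ (s ^ (1 - p) + t ^ (1 - p)) * (s ^ p - t ^ p) := by
  have hs : 0 < s := ht.trans_le hts
  set m := (log s + log t) / 2
  set d := (log s - log t) / 2
  have hd : 0 ≤ d := by have := log_le_log ht hts; unfold d; linarith
  have hs_eq : s = exp (m + d) := by rw [show m + d = log s by ring, exp_log hs]
  have ht_eq : t = exp (m - d) := by rw [show m - d = log t by ring, exp_log ht]
  have hsub : s - t = 2 * exp m * sinh d := by
    rw [hs_eq, ht_eq, sinh_eq, exp_add, exp_sub, exp_neg]; field_simp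
  have hmin : min (2 * p) 1 = 1 - max (1 - 2 * p) 0 := by
    rw [← min_sub_sub_left, sub_zero, sub_sub_cancel]
  rw [hs_eq, ht_eq, exp_rpow_add_mul_exp_rpow_sub, ← hs_eq, ← ht_eq, hsub, hmin]
  have key := sinh_mul_le_max_mul_sinh (c := 1 - 2 * p) (by linarith) hd
  linarith [mul_le_mul_of_nonneg_left key (by positivity : (0 : ℝ) ≤ 2 * exp m)]

noncomputable def becknerRatio (p s t : ℝ) : ℝ :=
  (s ^ (1 - p) + t ^ (1 - p)) * (s ^ p - t ^ p) / (2 * p * (s - t))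

theorem becknerRatio_comm (p s t : ℝ) : becknerRatio p s t = becknerRatio p t s := by
  unfold becknerRatio
  rw [← neg_div_neg_eq]
  ring_nf

theorem min_le_becknerRatio_of_lt {p s t : ℝ} (hp : 0 < p) (ht : 0 < t) (hts : t < s) :
    min 1 (1 / (2 * p)) ≤ becknerRatio p s t := by
  have hden : 0 < 2 * p * (s - t) := by have := sub_pos.2 hts; positivity
  have hmin : min 1 (1 / (2 * p)) * (2 * p) = min (2 * p) 1 := by
    rw [min_mul_of_nonneg _ _ (by positivity), one_mul, one_div_mul_cancel (by positivity)]
  rw [becknerRatio, le_div_iff₀ hden, ← mul_assoc, hmin]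
  exact min_mul_sub_le_rpow_add_mul_rpow_sub hp.le ht hts.le

theorem min_le_becknerRatio {p s t : ℝ} (hp : 0 < p) (hs : 0 < s) (ht : 0 < t) (hst : s ≠ t) :
    min 1 (1 / (2 * p)) ≤ becknerRatio p s t := by
  rcases hst.lt_or_gt with h | h
  · exact becknerRatio_comm p s t ▸ min_le_becknerRatio_of_lt hp hs h
  · exact min_le_becknerRatio_of_lt hp ht h

theorem becknerRatio_one_eq {p r : ℝ} (hp : 0 < p) (hr : 1 < r) :
    becknerRatio p r 1 = (1 + r ^ (-(1 - p))) * (1 - r ^ (-p)) / (2 * p * (1 - r⁻¹)) := by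
  have hr0 : 0 < r := one_pos.trans hr
  have hprod : r ^ (1 - p) * r ^ p = r := by rw [← rpow_add hr0, sub_add_cancel, rpow_one]
  have ha := rpow_pos_of_pos hr0 (1 - p)
  have hb := rpow_pos_of_pos hr0 p
  rw [becknerRatio, one_rpow, one_rpow, rpow_neg hr0.le, rpow_neg hr0.le]
  generalize r ^ (1 - p) = a at *
  generalize r ^ p = b at *
  subst hprod
  field_simp

theorem tendsto_becknerRatio_atTop {p : ℝ} (hp0 : 0 < p) (hp1 : p < 1) :
    Tendsto (fun r => becknerRatio p r 1) atTop (𝓝 (1 / (2 * p))) := by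
  have h := (((tendsto_const_nhds (x := (1 : ℝ))).add (tendsto_rpow_neg_atTop (sub_pos.2 hp1))).mul
    ((tendsto_const_nhds (x := (1 : ℝ))).sub (tendsto_rpow_neg_atTop hp0))).div
    ((tendsto_const_nhds (x := 2 * p)).mul ((tendsto_const_nhds (x := (1 : ℝ))).sub tendsto_inv_atTop_zero))
    (by simp [hp0.ne'] : 2 * p * (1 - 0 : ℝ) ≠ 0)
  simp only [add_zero, sub_zero, mul_one] at h
  refine h.congr' ?_
  filter_upwards [eventually_gt_atTop 1] with r hr
  exact (becknerRatio_one_eq hp0 hr).symm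

theorem theta_quotient_eq {α : ℝ} (hα : 1 < α) {θ : ℝ → ℝ → ℝ}
    (hθ : ∀ s t : ℝ, 0 < s → 0 < t →
      θ s t = if s = t then s ^ (2 - α) / α
              else ((α - 1) / α) * ((s - t) / (s ^ (α - 1) - t ^ (α - 1))))
    {s t : ℝ} (hs : 0 < s) (ht : 0 < t) :
    (θ s s + θ t t) / (2 * θ s t) = if s = t then 1 else becknerRatio (α - 1) s t := by
  have hα0 : α ≠ 0 := by positivity
  have hα1 : α - 1 ≠ 0 := sub_ne_zero.2 hα.ne'
  split_ifs with hst
  · subst hst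
    have : 0 < s ^ (2 - α) := rpow_pos_of_pos hs _
    rw [hθ s s hs hs, if_pos rfl]
    field_simp
    ring
  · have hst' : s ^ (α - 1) - t ^ (α - 1) ≠ 0 :=
      sub_ne_zero.2 ((rpow_left_inj hs.le ht.le hα1).not.2 hst)
    have hst'' : s - t ≠ 0 := sub_ne_zero.2 hst
    rw [hθ s s hs hs, hθ t t ht ht, hθ s t hs ht, if_pos rfl, if_pos rfl, if_neg hst, becknerRatio,
      show 1 - (α - 1) = 2 - α by ring]
    field_simp

theorem stmt3 (α : ℝ) (hα : α ∈ Set.Ioo 1 2)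
    (θ : ℝ → ℝ → ℝ)
    (hθ : ∀ s t : ℝ, 0 < s → 0 < t →
      θ s t = if s = t then s ^ (2 - α) / α
              else ((α - 1) / α) * ((s - t) / (s ^ (α - 1) - t ^ (α - 1)))) :
    sInf {x : ℝ | ∃ s t : ℝ, 0 < s ∧ 0 < t ∧ x = (θ s s + θ t t) / (2 * θ s t)} =
      if α ≤ 3 / 2 then 1 else 1 / (2 * (α - 1)) := by
  obtain ⟨hα1, hα2⟩ := hα
  set S := {x : ℝ | ∃ s t : ℝ, 0 < s ∧ 0 < t ∧ x = (θ s s + θ t t) / (2 * θ s t)}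
  have hp : 0 < α - 1 := sub_pos.2 hα1
  have hone : (1 : ℝ) ∈ S :=
    ⟨1, 1, one_pos, one_pos, by rw [theta_quotient_eq hα1 hθ one_pos one_pos, if_pos rfl]⟩
  have hlb : ∀ x ∈ S, min 1 (1 / (2 * (α - 1))) ≤ x := by
    rintro x ⟨s, t, hs, ht, rfl⟩
    rw [theta_quotient_eq hα1 hθ hs ht]
    split_ifs with hst
    · exact min_le_left _ _
    · exact min_le_becknerRatio hp hs ht hst
  have hlim : sInf S ≤ 1 / (2 * (α - 1)) := by
    refine ge_of_tendsto (tendsto_becknerRatio_atTop hp (by linarith)) ?_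
    filter_upwards [eventually_gt_atTop 1] with r hr
    refine csInf_le ⟨_, hlb⟩ ⟨r, 1, one_pos.trans hr, one_pos, ?_⟩
    rw [theta_quotient_eq hα1 hθ (one_pos.trans hr) one_pos, if_neg hr.ne']
  rw [le_antisymm (le_min (csInf_le ⟨_, hlb⟩ hone) hlim) (le_csInf ⟨1, hone⟩ hlb)]
  split_ifs with h
  · exact min_eq_left (by rw [le_div_iff₀ (by positivity)]; linarith)
  · exact min_eq_right (by rw [div_le_iff₀ (by positivity)]; linarith)
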